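/- Let (X, ‖·‖) be a complex normed space with X ≠ {0}, and define its Deformation D(X, ‖·‖) := sup{ |⟨a|b⟩| : a, b ∈ X, ‖a‖ = 1 = ‖b‖ }. Then 1 ≤ D(X, ‖·‖) ≤ √2. -/

import Mathlib

/-!
On unit vectors, `⟨a|b⟩ = (r + i s) / 4` where `r` and `s` are differences of squares of
numbers in `[0, 2]`, so `|r|, |s| ≤ 4` and `|⟨a|b⟩| ≤ √32 / 4 = √2`. Conversely `⟨a|a⟩ = 1`,
because `‖2a‖ = 2` and `‖(1 + i) a‖ = ‖(1 - i) a‖`.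
-/

noncomputable def cprod {X : Type*} [NormedAddCommGroup X] [NormedSpace ℂ X] (x y : X) : ℂ :=
  open scoped Classical in
  if x = 0 ∨ y = 0 then 0
  else
    ((‖x‖ * ‖y‖ : ℝ) : ℂ) * (1 / 4 : ℂ) *
      (((‖((‖x‖⁻¹ : ℝ) : ℂ) • x + ((‖y‖⁻¹ : ℝ) : ℂ) • y‖ ^ 2
          - ‖((‖x‖⁻¹ : ℝ) : ℂ) • x - ((‖y‖⁻¹ : ℝ) : ℂ) • y‖ ^ 2 : ℝ) : ℂ)
        + Complex.I *
          ((‖((‖x‖⁻¹ : ℝ) : ℂ) • x + Complex.I • (((‖y‖⁻¹ : ℝ) : ℂ) • y)‖ ^ 2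
            - ‖((‖x‖⁻¹ : ℝ) : ℂ) • x - Complex.I • (((‖y‖⁻¹ : ℝ) : ℂ) • y)‖ ^ 2 : ℝ) : ℂ))

lemma abs_norm_add_sq_sub_norm_sub_sq_le {E : Type*} [SeminormedAddCommGroup E] (x y : E) :
    |‖x + y‖ ^ 2 - ‖x - y‖ ^ 2| ≤ (‖x‖ + ‖y‖) ^ 2 := by
  have h_add : ‖x + y‖ ^ 2 ≤ (‖x‖ + ‖y‖) ^ 2 := by gcongr; exact norm_add_le x y
  have h_sub : ‖x - y‖ ^ 2 ≤ (‖x‖ + ‖y‖) ^ 2 := by gcongr; exact norm_sub_le x y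
  rw [abs_le]
  constructor <;> nlinarith [sq_nonneg ‖x + y‖, sq_nonneg ‖x - y‖]

lemma Complex.norm_ofReal_add_I_mul_le {r s c : ℝ} (hr : |r| ≤ c) (hs : |s| ≤ c) :
    ‖(r : ℂ) + Complex.I * s‖ ≤ Real.sqrt 2 * c := by
  have hc : 0 ≤ c := (abs_nonneg r).trans hr
  rw [mul_comm Complex.I, Complex.norm_add_mul_I, ← Real.sqrt_sq hc, ← Real.sqrt_mul zero_le_two]
  gcongr
  nlinarith [sq_abs r, sq_abs s, abs_nonneg r, abs_nonneg s]

section cprod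

variable {X : Type*} [NormedAddCommGroup X] [NormedSpace ℂ X]

lemma cprod_of_norm_eq_one {a b : X} (ha : ‖a‖ = 1) (hb : ‖b‖ = 1) :
    cprod a b = (1 / 4 : ℂ) *
      (((‖a + b‖ ^ 2 - ‖a - b‖ ^ 2 : ℝ) : ℂ)
        + Complex.I * ((‖a + Complex.I • b‖ ^ 2 - ‖a - Complex.I • b‖ ^ 2 : ℝ) : ℂ)) := by
  have ha0 : a ≠ 0 := norm_ne_zero_iff.mp (by simp [ha])
  have hb0 : b ≠ 0 := norm_ne_zero_iff.mp (by simp [hb])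
  simp [cprod, ha0, hb0, ha, hb]

lemma norm_add_I_smul_self_eq_norm_sub (x : X) : ‖x + Complex.I • x‖ = ‖x - Complex.I • x‖ := by
  have h_conj : ‖(1 + Complex.I : ℂ)‖ = ‖(1 - Complex.I : ℂ)‖ := by
    rw [← Complex.norm_conj]
    simp [sub_eq_add_neg]
  calc ‖x + Complex.I • x‖ = ‖(1 + Complex.I) • x‖ := by rw [add_smul, one_smul]
    _ = ‖(1 - Complex.I) • x‖ := by rw [norm_smul, norm_smul, h_conj]
    _ = ‖x - Complex.I • x‖ := by rw [sub_smul, one_smul]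

lemma cprod_self_of_norm_eq_one {a : X} (ha : ‖a‖ = 1) : cprod a a = 1 := by
  rw [cprod_of_norm_eq_one ha ha, norm_add_I_smul_self_eq_norm_sub, ← two_smul ℂ a, norm_smul, ha]
  norm_num

lemma norm_cprod_le_sqrt_two {a b : X} (ha : ‖a‖ = 1) (hb : ‖b‖ = 1) :
    ‖cprod a b‖ ≤ Real.sqrt 2 := by
  have hIb : ‖Complex.I • b‖ = 1 := by rw [norm_smul, Complex.norm_I, hb, one_mul]
  have hre : |‖a + b‖ ^ 2 - ‖a - b‖ ^ 2| ≤ 4 :=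
    (abs_norm_add_sq_sub_norm_sub_sq_le a b).trans_eq (by rw [ha, hb]; norm_num)
  have him : |‖a + Complex.I • b‖ ^ 2 - ‖a - Complex.I • b‖ ^ 2| ≤ 4 :=
    (abs_norm_add_sq_sub_norm_sub_sq_le a (Complex.I • b)).trans_eq (by rw [ha, hIb]; norm_num)
  rw [cprod_of_norm_eq_one ha hb, norm_mul]
  calc ‖(1 / 4 : ℂ)‖ * ‖_‖ ≤ 1 / 4 * (Real.sqrt 2 * 4) := by
        gcongr
        · norm_num
        · exact Complex.norm_ofReal_add_I_mul_le hre him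
    _ = Real.sqrt 2 := by ring

end cprod

/-- the Deformation `D(X,‖·‖) = sup{|⟨a|b⟩| : ‖a‖ = 1 = ‖b‖}` of a nontrivial
complex normed space satisfies `1 ≤ D(X,‖·‖) ≤ √2`. -/
theorem stmt8 {X : Type*} [NormedAddCommGroup X] [NormedSpace ℂ X] [Nontrivial X] :
    1 ≤ sSup {t : ℝ | ∃ a b : X, ‖a‖ = 1 ∧ ‖b‖ = 1 ∧ t = ‖cprod a b‖} ∧
    sSup {t : ℝ | ∃ a b : X, ‖a‖ = 1 ∧ ‖b‖ = 1 ∧ t = ‖cprod a b‖} ≤ Real.sqrt 2 := by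
  set S := {t : ℝ | ∃ a b : X, ‖a‖ = 1 ∧ ‖b‖ = 1 ∧ t = ‖cprod a b‖}
  obtain ⟨a, ha⟩ := exists_norm_eq X zero_le_one
  have one_mem : (1 : ℝ) ∈ S := ⟨a, a, ha, ha, by rw [cprod_self_of_norm_eq_one ha, norm_one]⟩
  have le_sqrt_two : ∀ t ∈ S, t ≤ Real.sqrt 2 := by
    rintro t ⟨a, b, ha, hb, rfl⟩
    exact norm_cprod_le_sqrt_two ha hb
  exact ⟨le_csSup ⟨_, le_sqrt_two⟩ one_mem, csSup_le ⟨1, one_mem⟩ le_sqrt_two⟩
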